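/- arXiv:2409.15519 — 4 statements merged into one kernel-verified Lean document; each statement's English description precedes it below -/
import Mathlib

section
/- Let N(x) be the infinite lower-bidiagonal-style weighted adjacency matrix with N(x)_{1,2} = x, N(x)_{i,i} = -(x+1)^i + (x+1) for i ≥ 2, N(x)_{i,i+1} = (x+1)^i - 1 for i ≥ 2, and all other entries 0. Then for all n ≥ 1, the sum over all j of the (1, j) entries of N(x)^{n-1} equals x^{n-1} as a polynomial identity. -/
open Polynomial

/-- The (truncated, `(n+1) × (n+1)`) weighted adjacency matrix `N(x)` of the infinite path
graph with self-loops: row/column index `k : Fin (n+1)` represents vertex `k+1`, and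
`N(x)_{1,2} = x`, `N(x)_{i,i} = -(x+1)^i + (x+1)` for `i ≥ 2`,
`N(x)_{i,i+1} = (x+1)^i - 1` for `i ≥ 2`, all other entries `0`. -/
noncomputable def Nmat (n : ℕ) : Matrix (Fin (n + 1)) (Fin (n + 1)) (Polynomial ℤ) :=
  fun k l =>
    if k.val = 0 ∧ l.val = 1 then X
    else if 1 ≤ k.val ∧ l.val = k.val then -(X + 1) ^ (k.val + 1) + (X + 1)
    else if 1 ≤ k.val ∧ l.val = k.val + 1 then (X + 1) ^ (k.val + 1) - 1
    else 0

lemma Nmat_zero {n : ℕ} (k j : Fin (n + 1)) (h : k.val + 1 < j.val) : Nmat n k j = 0 := by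
  unfold Nmat
  rw [if_neg, if_neg, if_neg] <;> omega

lemma Nmat_support {n : ℕ} (m : ℕ) (j : Fin (n + 1)) (h : m < j.val) :
    (Nmat n ^ m) 0 j = 0 := by
  induction m generalizing j with
  | zero =>
    rw [pow_zero, Matrix.one_apply_ne]
    intro hj; rw [← hj] at h; simp at h
  | succ m ih =>
    rw [pow_succ, Matrix.mul_apply]
    apply Finset.sum_eq_zero
    intro k _
    by_cases hk : m < k.val
    · rw [ih k hk, zero_mul]
    · rw [Nmat_zero k j (by omega), mul_zero]

lemma sum_if_val {n : ℕ} (c : ℕ) (hc : c < n + 1) (f : Polynomial ℤ) :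
    ∑ j : Fin (n + 1), (if j.val = c then f else 0) = f := by
  rw [Finset.sum_eq_single (⟨c, hc⟩ : Fin (n + 1))]
  · simp
  · intro b _ hb
    rw [if_neg]
    simpa [Fin.ext_iff] using hb
  · simp

lemma Nmat_rowsum {n : ℕ} (k : Fin (n + 1)) (hk : k.val < n) :
    ∑ j, Nmat n k j = X := by
  by_cases h0 : k.val = 0
  · have : ∀ j : Fin (n + 1), Nmat n k j = (if j.val = 1 then X else 0) := by
      intro j
      unfold Nmat
      split_ifs <;> first | rfl | omega
    rw [Finset.sum_congr rfl (fun j _ => this j), sum_if_val 1 (by omega)]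
  · have : ∀ j : Fin (n + 1), Nmat n k j =
        (if j.val = k.val then (-(X + 1) ^ (k.val + 1) + (X + 1)) else 0)
          + (if j.val = k.val + 1 then ((X + 1) ^ (k.val + 1) - 1) else 0) := by
      intro j
      unfold Nmat
      split_ifs <;> first | ring1 | omega
    rw [Finset.sum_congr rfl (fun j _ => this j), Finset.sum_add_distrib,
      sum_if_val k.val (by omega), sum_if_val (k.val + 1) (by omega)]
    ring

/-- For all `n ≥ 1`, the sum of the entries in the first row of `N(x)^{n-1}` equals
`x^{n-1}` as a polynomial identity. -/
theorem stmt7 (n : ℕ) (hn : 1 ≤ n) :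
    ∑ j, (Nmat n ^ (n - 1)) 0 j = (X : Polynomial ℤ) ^ (n - 1) := by
  have key : ∀ m, m ≤ n - 1 → ∑ j, (Nmat n ^ m) 0 j = (X : Polynomial ℤ) ^ m := by
    intro m
    induction m with
    | zero => intro _; simp [Matrix.one_apply]
    | succ m ih =>
      intro hm
      have hsum : ∑ j, (Nmat n ^ (m + 1)) 0 j
          = ∑ k, (Nmat n ^ m) 0 k * ∑ j, Nmat n k j := by
        simp only [pow_succ, Matrix.mul_apply, Finset.mul_sum]
        exact Finset.sum_comm
      rw [hsum]
      have : ∀ k : Fin (n + 1), (Nmat n ^ m) 0 k * ∑ j, Nmat n k j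
          = (Nmat n ^ m) 0 k * X := by
        intro k
        by_cases hk : k.val < n
        · rw [Nmat_rowsum k hk]
        · rw [Nmat_support m k (by omega), zero_mul, zero_mul]
      rw [Finset.sum_congr rfl (fun k _ => this k), ← Finset.sum_mul,
        ih (by omega), pow_succ]
  exact key (n - 1) le_rfl
end

section
/- For n ≥ 1, the number of subgraphs H of the complete DAG K_{n+1} with vertex set exactly {1, ..., n+1} such that H is connected and every vertex lies on a directed path from 1 to n+1 equals sum_{m=0}^{n-1} (-1)^m · π_{n-m} · h_m(2^1 - 1, 2^2 - 1, ..., 2^{n-m} - 1), where π_k = prod_{i=1}^{k} (2^i - 1). -/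
/-- The complete homogeneous symmetric polynomial `h_m(x_1, …, x_k)` (evaluated in `ℤ`):
the sum over all monomials of degree `m` in `x_1, …, x_k`. -/
def hfull (k m : ℕ) (x : Fin k → ℤ) : ℤ :=
  ∑ d ∈ Finset.Nat.antidiagonalTuple k m, ∏ i, x i ^ d i

/-!
Since edges go forward, every vertex lies on a directed path from `0` to the last vertex exactly
when every vertex but the last has an out-neighbour and every vertex but `0` has an in-neighbour;
connectivity and the absence of isolated vertices then follow, and the last vertex gets an
in-neighbour for free. Recording `H` by its out-neighbourhoods and applying inclusion–exclusion
to the set `T` of interior vertices without in-neighbour, the count becomes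
`∑_T (-1)^|T| ∏_{i < n} (2^{#((i, n] \ T)} - 1)`.
With a sequence `x` in place of `c ↦ 2^c - 1`, this sum and the right-hand side both satisfy
`S_1(x) = x_1` and `S_{n+1}(x) = x_1 (S_n(x ∘ succ) - S_n(x))`: for the first, split on
whether `n ∈ T`; for the second, use
`h_{m+1}(x_1, …, x_k) = h_{m+1}(x_2, …, x_k) + x_1 h_m(x_1, …, x_k)`.
-/

open Finset Relation

section Reachability

variable {α : Type*} [Preorder α] {r : α → α → Prop}

theorem Relation.reflTransGen_of_exists_pred [WellFoundedLT α] {a : α}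
    (hr : ∀ u v, r u v → u < v) (h : ∀ v, v ≠ a → ∃ u, r u v) (v : α) :
    ReflTransGen r a v := by
  induction v using WellFoundedLT.induction with
  | _ v ih =>
    obtain rfl | hv := eq_or_ne v a
    · exact .refl
    · obtain ⟨u, huv⟩ := h v hv
      exact (ih u (hr u v huv)).tail huv

theorem Relation.reflTransGen_of_exists_succ [WellFoundedGT α] {b : α}
    (hr : ∀ u v, r u v → u < v) (h : ∀ u, u ≠ b → ∃ v, r u v) (u : α) :
    ReflTransGen r u b := by
  induction u using WellFoundedGT.induction with
  | _ u ih =>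
    obtain rfl | hu := eq_or_ne u b
    · exact .refl
    · obtain ⟨v, huv⟩ := h u hu
      exact .head huv (ih v (hr u v huv))

end Reachability

theorem Finset.inf_filter_eq_filter_forall {α ι : Type*} [Fintype α] [DecidableEq α]
    (s : Finset ι) (P : α → ι → Prop) [∀ a i, Decidable (P a i)] :
    s.inf (fun i => ({a | P a i} : Finset α)) = ({a | ∀ i ∈ s, P a i} : Finset α) := by
  classical
  induction s using Finset.induction_on with
  | empty => simp
  | insert i s _ ih => ext; simp [ih]

theorem Finset.card_filter_forall_eq_sum_powerset {α ι : Type*} [Fintype α] [DecidableEq α]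
    (A : Finset α) (s : Finset ι) (P : α → ι → Prop)
    [DecidablePred fun a => ∀ i ∈ s, P a i]
    [∀ t : Finset ι, DecidablePred fun a => ∀ i ∈ t, ¬P a i] :
    (#{a ∈ A | ∀ i ∈ s, P a i} : ℤ) =
      ∑ t ∈ s.powerset, (-1) ^ #t * (#{a ∈ A | ∀ i ∈ t, ¬P a i} : ℤ) := by
  classical
  convert inclusion_exclusion_sum_inf_compl s (fun i => {a | ¬P a i})
    (fun a => if a ∈ A then (1 : ℤ) else 0) using 1 <;>
  simp [sum_ite_mem, inf_filter_eq_filter_forall, inter_comm _ A, inter_filter] <;> congr!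

theorem Finset.card_powerset_filter_nonempty {α : Type*} [DecidableEq α] (s : Finset α) :
    #{t ∈ s.powerset | t.Nonempty} = 2 ^ #s - 1 := by
  simp_rw [nonempty_iff_ne_empty, filter_ne', card_erase_of_mem (empty_mem_powerset s),
    card_powerset]

section OutNeighbourhoods

variable {α β : Type*} [Fintype α] [Fintype β] [DecidableEq α] [DecidableEq β]

def outNbhdEquiv : Finset (α × β) ≃ (α → Finset β) where
  toFun H a := {b | (a, b) ∈ H}
  invFun f := {e | e.2 ∈ f e.1}
  left_inv H := by ext; simp
  right_inv f := by ext; simp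

@[simp]
theorem mem_outNbhdEquiv {H : Finset (α × β)} {a : α} {b : β} :
    b ∈ outNbhdEquiv H a ↔ (a, b) ∈ H := by
  simp [outNbhdEquiv]

end OutNeighbourhoods

section ForwardGraphs

variable {n : ℕ}

theorem paths_iff_exists_neighbours (hn : 1 ≤ n) (H : Finset (Fin (n + 1) × Fin (n + 1)))
    (hH : ∀ e ∈ H, e.1 < e.2) :
    ((∀ v : Fin (n + 1), ∃ e ∈ H, e.1 = v ∨ e.2 = v) ∧
        (∀ u v : Fin (n + 1), ReflTransGen (fun a b => (a, b) ∈ H ∨ (b, a) ∈ H) u v) ∧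
        ∀ v : Fin (n + 1),
          ReflTransGen (fun u w => (u, w) ∈ H) 0 v ∧
          ReflTransGen (fun u w => (u, w) ∈ H) v (Fin.last n)) ↔
      (∀ v, v ≠ Fin.last n → ∃ w, (v, w) ∈ H) ∧
        ∀ v ∈ Ioo 0 (Fin.last n), ∃ u, (u, v) ∈ H := by
  have hr : ∀ u v, (u, v) ∈ H → u < v := fun u v huv => hH _ huv
  have h0 : (0 : Fin (n + 1)) ≠ Fin.last n := by simp [Fin.ext_iff]; omega
  constructor
  · rintro ⟨-, -, hreach⟩
    refine ⟨fun v hv => ?_, fun v hv => ?_⟩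
    · obtain rfl | ⟨w, hvw, -⟩ := (hreach v).2.cases_head
      · exact absurd rfl hv
      · exact ⟨w, hvw⟩
    · obtain h | ⟨u, -, huv⟩ := (hreach v).1.cases_tail
      · exact absurd h (mem_Ioo.1 hv).1.ne'
      · exact ⟨u, huv⟩
  · rintro ⟨hout, hinterior⟩
    have toLast := reflTransGen_of_exists_succ hr hout
    have hpred : ∀ v, v ≠ 0 → ∃ u, (u, v) ∈ H := by
      intro v hv
      by_cases hvl : v = Fin.last n
      · subst hvl
        obtain h | ⟨u, -, hu⟩ := (toLast 0).cases_tail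
        · exact absurd h h0.symm
        · exact ⟨u, hu⟩
      · exact hinterior v (mem_Ioo.2 ⟨Fin.pos_iff_ne_zero.2 hv, Fin.lt_last_iff_ne_last.2 hvl⟩)
    have fromZero := reflTransGen_of_exists_pred hr hpred
    refine ⟨fun v => ?_, fun u v => ?_, fun v => ⟨fromZero v, toLast v⟩⟩
    · obtain rfl | hv := eq_or_ne v 0
      · obtain ⟨w, hw⟩ := hout 0 h0
        exact ⟨_, hw, .inl rfl⟩
      · obtain ⟨u, hu⟩ := hpred v hv
        exact ⟨_, hu, .inr rfl⟩
    · exact (ReflTransGen.mono (fun _ _ => Or.inr) _ _ (reflTransGen_swap.2 (fromZero u))).trans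
        (ReflTransGen.mono (fun _ _ => Or.inl) _ _ (fromZero v))

def outNbhdFamilies (n : ℕ) : Finset (Fin (n + 1) → Finset (Fin (n + 1))) :=
  {f | (∀ i, f i ⊆ Ioi i) ∧ ∀ i, i ≠ Fin.last n → (f i).Nonempty}

theorem card_forward_eq_card_outNbhdFamilies :
    Nat.card {H : Finset (Fin (n + 1) × Fin (n + 1)) // (∀ e ∈ H, e.1 < e.2) ∧
        (∀ v, v ≠ Fin.last n → ∃ w, (v, w) ∈ H) ∧
        ∀ v ∈ Ioo 0 (Fin.last n), ∃ u, (u, v) ∈ H} =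
      #{f ∈ outNbhdFamilies n | ∀ j ∈ Ioo 0 (Fin.last n), ∃ i, j ∈ f i} := by
  rw [← Nat.card_eq_finsetCard]
  refine Nat.card_congr (outNbhdEquiv.subtypeEquiv fun H => ?_)
  simp [outNbhdFamilies, subset_iff, Finset.Nonempty, and_assoc]

theorem card_outNbhdFamilies_avoiding (T : Finset (Fin (n + 1))) :
    #{f ∈ outNbhdFamilies n | ∀ j ∈ T, ¬∃ i, j ∈ f i} =
      ∏ i : Fin n, (2 ^ #(Ioi i.castSucc \ T) - 1) := by
  have hpi : {f ∈ outNbhdFamilies n | ∀ j ∈ T, ¬∃ i, j ∈ f i} =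
      Fintype.piFinset fun i => {s ∈ (Ioi i \ T).powerset | i ≠ Fin.last n → s.Nonempty} := by
    ext f
    simp only [outNbhdFamilies, mem_filter, mem_univ, true_and, Fintype.mem_piFinset,
      mem_powerset, subset_sdiff, disjoint_right, forall_and, not_exists]
    tauto
  rw [hpi, Fintype.card_piFinset, Fin.prod_univ_castSucc]
  simp [(Fin.castSucc_lt_last _).ne, card_powerset_filter_nonempty,
    Ioi_eq_empty.2 fun a _ => Fin.le_last a]

end ForwardGraphs

section ExclusionSum

variable {n : ℕ}

def exclusionSum (n : ℕ) (x : ℕ → ℤ) : ℤ :=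
  ∑ T ∈ (Ioo 0 n).powerset, (-1) ^ #T * ∏ i ∈ range n, x #(Ioc i n \ T)

theorem card_Ioi_castSucc_sdiff (T : Finset (Fin (n + 1))) (i : Fin n) :
    #(Ioi i.castSucc \ T) = #(Ioc (i : ℕ) n \ T.image Fin.val) := by
  rw [← card_image_of_injective _ Fin.val_injective, image_sdiff _ _ Fin.val_injective,
    Fin.finsetImage_val_Ioi, Fin.val_castSucc, Ioo_add_one_right_eq_Ioc]

theorem sum_powerset_fin_eq_exclusionSum (x : ℕ → ℤ) :
    ∑ T ∈ (Ioo 0 (Fin.last n)).powerset, (-1) ^ #T * ∏ i : Fin n, x #(Ioi i.castSucc \ T) =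
      exclusionSum n x := by
  have hIoo : Ioo 0 n = (Ioo 0 (Fin.last n)).image Fin.val := by simp
  rw [exclusionSum, hIoo, powerset_image,
    sum_image fun _ _ _ _ h => image_injective Fin.val_injective h]
  refine sum_congr rfl fun T _ => ?_
  simp_rw [card_image_of_injective _ Fin.val_injective, card_Ioi_castSucc_sdiff]
  rw [Fin.prod_univ_eq_prod_range (fun i => x #(Ioc i n \ T.image Fin.val))]

theorem card_forward_eq_exclusionSum :
    (Nat.card {H : Finset (Fin (n + 1) × Fin (n + 1)) // (∀ e ∈ H, e.1 < e.2) ∧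
        (∀ v, v ≠ Fin.last n → ∃ w, (v, w) ∈ H) ∧
        ∀ v ∈ Ioo 0 (Fin.last n), ∃ u, (u, v) ∈ H} : ℤ) =
      exclusionSum n (fun c => 2 ^ c - 1) := by
  rw [card_forward_eq_card_outNbhdFamilies, card_filter_forall_eq_sum_powerset,
    ← sum_powerset_fin_eq_exclusionSum]
  refine sum_congr rfl fun T _ => ?_
  rw [card_outNbhdFamilies_avoiding]
  push_cast [Nat.one_le_two_pow]
  rfl

theorem card_Ioc_add_one_sdiff {i : ℕ} {T : Finset ℕ} (hi : i ≤ n) (hT : n + 1 ∉ T) :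
    #(Ioc i (n + 1) \ T) = #(Ioc i n \ T) + 1 := by
  rw [← insert_Ioc_right_eq_Ioc_add_one hi, insert_sdiff_of_notMem _ hT,
    card_insert_of_notMem (by simp)]

theorem card_Ioc_add_one_sdiff_insert {i : ℕ} {T : Finset ℕ} (hi : i < n) (hnT : n ∉ T)
    (hT : n + 1 ∉ T) : #(Ioc i (n + 1) \ insert n T) = #(Ioc i n \ T) := by
  rw [sdiff_insert, card_erase_of_mem (by simp [hi, hnT]), card_Ioc_add_one_sdiff hi.le hT,
    Nat.add_sub_cancel]

theorem exclusionSum_one (x : ℕ → ℤ) : exclusionSum 1 x = x 1 := by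
  simp [exclusionSum, show Ioo 0 1 = (∅ : Finset ℕ) by rfl]

theorem exclusionSum_add_one (hn : 1 ≤ n) (x : ℕ → ℤ) :
    exclusionSum (n + 1) x = x 1 * (exclusionSum n (fun j => x (j + 1)) - exclusionSum n x) := by
  rw [exclusionSum, Ioo_add_one_right_eq_Ioc, ← Ioo_insert_right hn,
    sum_powerset_insert (β := ℤ) (show n ∉ Ioo 0 n by simp), exclusionSum, exclusionSum,
    mul_sub, mul_sum, mul_sum, ← sum_add_distrib, ← sum_sub_distrib]
  refine sum_congr rfl fun T hT => ?_
  have hTn : ∀ j ∈ T, j < n := fun j hj => (mem_Ioo.1 (mem_powerset.1 hT hj)).2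
  have hnT : n ∉ T := fun h => (hTn n h).false
  have hn1T : n + 1 ∉ T := fun h => by have := hTn _ h; omega
  have hlast : #(Ioc n (n + 1) \ T) = 1 := by rw [card_Ioc_add_one_sdiff le_rfl hn1T]; simp
  have hlast' : #(Ioc n (n + 1) \ insert n T) = 1 := by
    rw [sdiff_insert_of_notMem (by simp), hlast]
  simp only [prod_range_succ, card_insert_of_notMem hnT, hlast, hlast']
  rw [prod_congr rfl fun i hi => congrArg x (card_Ioc_add_one_sdiff (mem_range.1 hi).le hn1T),
    prod_congr rfl fun i hi =>
      congrArg x (card_Ioc_add_one_sdiff_insert (mem_range.1 hi) hnT hn1T)]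
  ring

end ExclusionSum

theorem Finset.Nat.sum_antidiagonalTuple_succ {M : Type*} [AddCommMonoid M] (k N : ℕ)
    (F : (Fin (k + 1) → ℕ) → M) :
    ∑ d ∈ antidiagonalTuple (k + 1) N, F d =
      ∑ p ∈ antidiagonal N, ∑ e ∈ antidiagonalTuple k p.2, F (Fin.cons p.1 e) := by
  change ((List.Nat.antidiagonalTuple (k + 1) N).map F).sum =
    ((List.Nat.antidiagonal N).map fun p =>
      ((List.Nat.antidiagonalTuple k p.2).map fun e => F (Fin.cons p.1 e)).sum).sum
  simp [List.Nat.antidiagonalTuple, List.flatMap_def, List.sum_flatten, Function.comp_def]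

theorem hfull_zero_right (k : ℕ) (x : Fin k → ℤ) : hfull k 0 x = 1 := by
  simp [hfull, Nat.antidiagonalTuple_zero_right]

theorem hfull_zero_left (m : ℕ) (x : Fin 0 → ℤ) : hfull 0 (m + 1) x = 0 := by
  simp [hfull]

theorem hfull_succ_left (k m : ℕ) (x : Fin (k + 1) → ℤ) :
    hfull (k + 1) m x = ∑ p ∈ antidiagonal m, x 0 ^ p.1 * hfull k p.2 (Fin.tail x) := by
  simp [hfull, Nat.sum_antidiagonalTuple_succ, Fin.prod_univ_succ, mul_sum, Fin.tail]

theorem hfull_succ_succ (k m : ℕ) (x : Fin (k + 1) → ℤ) :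
    hfull (k + 1) (m + 1) x = hfull k (m + 1) (Fin.tail x) + x 0 * hfull (k + 1) m x := by
  rw [hfull_succ_left, Nat.sum_antidiagonal_succ, hfull_succ_left, mul_sum]
  simp [pow_succ', mul_assoc]

theorem prod_Icc_one_add_one (k : ℕ) (x : ℕ → ℤ) :
    ∏ i ∈ Icc 1 (k + 1), x i = x 1 * ∏ i ∈ Icc 1 k, x (i + 1) := by
  rw [← Ico_add_one_right_eq_Icc, ← Ico_add_one_right_eq_Icc, prod_Ico_eq_prod_range,
    prod_Ico_eq_prod_range, Nat.add_sub_cancel, Nat.add_sub_cancel, prod_range_succ', mul_comm]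
  simp [add_comm, add_left_comm]

/-- `π_k h_m(x_1, …, x_k)`, the sum of `∏ x_j ^ a_j` over compositions `a` of `k + m` into `k`
positive parts. -/
def compositionWeight (k m : ℕ) (x : ℕ → ℤ) : ℤ :=
  (∏ i ∈ Icc 1 k, x i) * hfull k m (fun i => x (i + 1))

theorem compositionWeight_zero_succ (m : ℕ) (x : ℕ → ℤ) :
    compositionWeight 0 (m + 1) x = 0 := by
  simp [compositionWeight, hfull_zero_left]

theorem compositionWeight_succ_zero (k : ℕ) (x : ℕ → ℤ) :
    compositionWeight (k + 1) 0 x = x 1 * compositionWeight k 0 (fun j => x (j + 1)) := by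
  simp [compositionWeight, hfull_zero_right, prod_Icc_one_add_one]

theorem compositionWeight_succ_succ (k m : ℕ) (x : ℕ → ℤ) :
    compositionWeight (k + 1) (m + 1) x =
      x 1 * (compositionWeight k (m + 1) (fun j => x (j + 1)) + compositionWeight (k + 1) m x) := by
  have htail : Fin.tail (fun i : Fin (k + 1) => x (i + 1)) = fun i : Fin k => x (i + 1 + 1) :=
    rfl
  simp only [compositionWeight, hfull_succ_succ, prod_Icc_one_add_one, htail, Fin.val_zero]
  ring

def compositionSum (n : ℕ) (x : ℕ → ℤ) : ℤ :=
  ∑ m ∈ range n, (-1) ^ m * compositionWeight (n - m) m x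

theorem compositionSum_one (x : ℕ → ℤ) : compositionSum 1 x = x 1 := by
  simp [compositionSum, compositionWeight, hfull_zero_right]

theorem compositionSum_add_one {n : ℕ} (hn : 1 ≤ n) (x : ℕ → ℤ) :
    compositionSum (n + 1) x =
      x 1 * (compositionSum n (fun j => x (j + 1)) - compositionSum n x) := by
  obtain ⟨p, rfl⟩ := Nat.exists_eq_add_of_le' hn
  have hsplit : ∀ j ∈ range (p + 1),
      (-1) ^ (j + 1) * compositionWeight (p + 1 + 1 - (j + 1)) (j + 1) x =
        x 1 * ((-1) ^ (j + 1) * compositionWeight (p - j) (j + 1) (fun c => x (c + 1))) -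
          x 1 * ((-1) ^ j * compositionWeight (p + 1 - j) j x) := by
    intro j hj
    rw [show p + 1 + 1 - (j + 1) = p - j + 1 by grind, compositionWeight_succ_succ,
      show p - j + 1 = p + 1 - j by grind]
    ring
  have hshift : compositionSum (p + 1) (fun j => x (j + 1)) =
      ∑ j ∈ range (p + 1),
          (-1) ^ (j + 1) * compositionWeight (p - j) (j + 1) (fun c => x (c + 1)) +
        compositionWeight (p + 1) 0 (fun j => x (j + 1)) := by
    rw [compositionSum, sum_range_succ', sum_range_succ, Nat.sub_self,
      compositionWeight_zero_succ]
    simp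
  rw [compositionSum, sum_range_succ', sum_congr rfl hsplit, sum_sub_distrib, ← mul_sum,
    ← mul_sum, hshift, compositionSum]
  simp only [pow_zero, one_mul, Nat.sub_zero, compositionWeight_succ_zero]
  ring

theorem exclusionSum_eq_compositionSum {n : ℕ} (hn : 1 ≤ n) (x : ℕ → ℤ) :
    exclusionSum n x = compositionSum n x := by
  induction n, hn using Nat.le_induction generalizing x with
  | base => rw [exclusionSum_one, compositionSum_one]
  | succ n hn ih => rw [exclusionSum_add_one hn, compositionSum_add_one hn, ih, ih]

/-- For `n ≥ 1`, the number of subgraphs `H` of the complete DAG `K_{n+1}` with vertex set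
exactly `{1, …, n+1}` (every vertex incident to an edge), connected as an undirected
graph, and such that every vertex lies on a directed path from the first vertex to the
last vertex, equals `∑_{m=0}^{n-1} (-1)^m · π_{n-m} · h_m(2^1 - 1, …, 2^{n-m} - 1)` where
`π_k = ∏_{i=1}^{k} (2^i - 1)`. -/
theorem stmt9 (n : ℕ) (hn : 1 ≤ n) :
    (Nat.card {H : Finset (Fin (n + 1) × Fin (n + 1)) //
        (∀ e ∈ H, e.1 < e.2) ∧
        (∀ v : Fin (n + 1), ∃ e ∈ H, e.1 = v ∨ e.2 = v) ∧
        (∀ u v : Fin (n + 1),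
          Relation.ReflTransGen (fun a b => (a, b) ∈ H ∨ (b, a) ∈ H) u v) ∧
        ∀ v : Fin (n + 1),
          Relation.ReflTransGen (fun u w => (u, w) ∈ H) 0 v ∧
          Relation.ReflTransGen (fun u w => (u, w) ∈ H) v (Fin.last n)} : ℤ) =
      ∑ m ∈ Finset.range n,
        (-1 : ℤ) ^ m * (∏ i ∈ Finset.Icc 1 (n - m), ((2 : ℤ) ^ i - 1)) *
          hfull (n - m) m (fun i => 2 ^ (i.val + 1) - 1) := by
  rw [Nat.card_congr (Equiv.subtypeEquivRight fun H =>
      and_congr_right (paths_iff_exists_neighbours hn H)),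
    card_forward_eq_exclusionSum, exclusionSum_eq_compositionSum hn]
  simp only [compositionSum, compositionWeight, mul_assoc]
end

section
/- A subgraph H of the complete DAG K_{n+1} is a primitive face graph of CRY_n (i.e., H is the support of a flow with netflow (1, 0, ..., 0, -1) and V(H) = {1, ..., n+1}) if and only if every vertex i with 2 ≤ i ≤ n+1 has at least one incoming edge in H and every vertex i with 1 ≤ i ≤ n has at least one outgoing edge in H. -/
open Finset

/-- Vertex set of a subgraph `H` of the complete DAG on `Fin (n+1)`, given by its edge set. -/
def verts (n : ℕ) (H : Finset (Fin (n + 1) × Fin (n + 1))) : Finset (Fin (n + 1)) :=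
  H.image Prod.fst ∪ H.image Prod.snd

/-- The underlying undirected simple graph of the edge set `H`. -/
def graphOf (n : ℕ) (H : Finset (Fin (n + 1) × Fin (n + 1))) : SimpleGraph (Fin (n + 1)) where
  Adj u v := u ≠ v ∧ ((u, v) ∈ H ∨ (v, u) ∈ H)
  symm := ⟨fun u v h => ⟨h.1.symm, h.2.symm⟩⟩
  loopless := ⟨fun v h => h.1 rfl⟩

/-- The number of connected components of `H`, i.e. of the undirected graph induced on the
vertex set of `H`. -/
noncomputable def numComponents (n : ℕ) (H : Finset (Fin (n + 1) × Fin (n + 1))) : ℕ :=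
  Nat.card (SimpleGraph.induce (↑(verts n H) : Set (Fin (n + 1))) (graphOf n H)).ConnectedComponent

/-- The first Betti number `|E(H)| - |V(H)| + c(H)` of the subgraph `H`. -/
noncomputable def betti (n : ℕ) (H : Finset (Fin (n + 1) × Fin (n + 1))) : ℕ :=
  H.card + numComponents n H - (verts n H).card

/-- `H` is a subgraph of the complete DAG `K_{n+1}` (edges `i → j` for `i < j` on
`Fin (n+1)`) that is the support of a nonnegative flow with netflow `(1, 0, …, 0, -1)`. -/
def IsCRYSupport (n : ℕ) (H : Finset (Fin (n + 1) × Fin (n + 1))) : Prop :=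
  (∀ e ∈ H, e.1 < e.2) ∧
  ∃ f : Fin (n + 1) × Fin (n + 1) → ℝ,
    (∀ e, 0 ≤ f e) ∧
    (∀ e, f e ≠ 0 ↔ e ∈ H) ∧
    ∀ v : Fin (n + 1),
      (∑ w, f (v, w)) - (∑ w, f (w, v)) =
        if v = 0 then 1 else if v = Fin.last n then -1 else 0

/-! If every vertex but the source has an in-edge from a smaller vertex and every vertex but the
sink has an out-edge to a larger one, then each edge `(a, b)` of `H` extends, by following
in-edges back from `a` and out-edges forward from `b`, to a source-sink path inside `H`; the
average of these unit path flows has netflow `(1, 0, …, 0, -1)` and support exactly `H`.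
Conversely, at a vertex other than the source the netflow is `≤ 0`, so if the vertex carries any
flow its inflow is positive and it has an incoming edge; dually for outgoing edges. -/

section Flow

variable {V : Type*} [Fintype V]

def netflow : (V × V → ℝ) →ₗ[ℝ] V → ℝ where
  toFun f v := ∑ w, f (v, w) - ∑ w, f (w, v)
  map_add' f g := by
    ext v
    simp only [Pi.add_apply, Finset.sum_add_distrib]
    ring
  map_smul' c f := by
    ext v
    simp only [Pi.smul_apply, smul_eq_mul, ← Finset.mul_sum, RingHom.id_apply]
    ring

theorem netflow_apply (f : V × V → ℝ) (v : V) :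
    netflow f v = ∑ w, f (v, w) - ∑ w, f (w, v) :=
  rfl

theorem netflow_single [DecidableEq V] (e : V × V) :
    netflow (Pi.single e 1) = Pi.single e.1 1 - Pi.single e.2 1 := by
  obtain ⟨a, b⟩ := e
  ext v
  simp only [netflow_apply, Pi.single_apply, Prod.mk.injEq, ite_and, Finset.sum_ite_irrel,
    Finset.sum_ite_eq', Finset.mem_univ, if_true, Finset.sum_const_zero, Pi.sub_apply]

theorem netflow_comp_swap (f : V × V → ℝ) : netflow (f ∘ Prod.swap) = -netflow f := by
  ext v
  simp [netflow_apply]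

theorem exists_inflow_of_netflow_nonpos {f : V × V → ℝ} (hf : 0 ≤ f) {v : V}
    (hv : netflow f v ≤ 0) (hvf : ∃ e, f e ≠ 0 ∧ (e.1 = v ∨ e.2 = v)) : ∃ u, f (u, v) ≠ 0 := by
  by_contra! hin
  obtain ⟨⟨a, b⟩, hab, rfl | rfl⟩ := hvf
  · have hout : f (a, b) ≤ ∑ w, f (a, w) :=
      Finset.single_le_sum (fun w _ => hf (a, w)) (Finset.mem_univ b)
    rw [netflow_apply, Finset.sum_eq_zero fun u _ => hin u] at hv
    exact hab (le_antisymm (by linarith) (hf _))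
  · exact hab (hin a)

theorem exists_outflow_of_netflow_nonneg {f : V × V → ℝ} (hf : 0 ≤ f) {v : V}
    (hv : 0 ≤ netflow f v) (hvf : ∃ e, f e ≠ 0 ∧ (e.1 = v ∨ e.2 = v)) : ∃ w, f (v, w) ≠ 0 := by
  refine exists_inflow_of_netflow_nonpos (f := f ∘ Prod.swap) (fun e => hf e.swap) ?_ ?_
  · simpa [netflow_comp_swap] using hv
  · obtain ⟨e, he, hev⟩ := hvf
    exact ⟨e.swap, he, hev.symm⟩

theorem exists_flow_from_of_forall_exists_pred [DecidableEq V] {r : V → V → Prop}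
    (hr : WellFounded r) {H : Set (V × V)} {s : V}
    (hpred : ∀ v ≠ s, ∃ u, r u v ∧ (u, v) ∈ H) (a : V) :
    ∃ g : V × V → ℝ, 0 ≤ g ∧ Function.support g ⊆ H ∧
      netflow g = Pi.single s 1 - Pi.single a 1 := by
  induction a using hr.induction with
  | _ a ih =>
  by_cases ha : a = s
  · exact ⟨0, le_rfl, by simp, by simp [ha]⟩
  obtain ⟨u, hua, huH⟩ := hpred a ha
  obtain ⟨g, hg, hgH, hgnet⟩ := ih u hua
  refine ⟨g + Pi.single (u, a) 1, add_nonneg hg (Pi.single_nonneg.2 zero_le_one), ?_, ?_⟩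
  · refine (Function.support_add _ _).trans (Set.union_subset hgH ?_)
    exact Pi.support_single_subset.trans (Set.singleton_subset_iff.2 huH)
  · rw [map_add, hgnet, netflow_single]
    abel

theorem exists_flow_to_of_forall_exists_succ [DecidableEq V] {r : V → V → Prop}
    (hr : WellFounded r) {H : Set (V × V)} {t : V}
    (hsucc : ∀ v ≠ t, ∃ w, r w v ∧ (v, w) ∈ H) (a : V) :
    ∃ g : V × V → ℝ, 0 ≤ g ∧ Function.support g ⊆ H ∧
      netflow g = Pi.single a 1 - Pi.single t 1 := by
  obtain ⟨g, hg, hgH, hgnet⟩ :=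
    exists_flow_from_of_forall_exists_pred hr (H := Prod.swap ⁻¹' H) hsucc a
  exact ⟨g ∘ Prod.swap, fun e => hg e.swap, fun e he => hgH he,
    by rw [netflow_comp_swap, hgnet, neg_sub]⟩

theorem exists_support_eq_of_forall_mem {H : Finset (V × V)} (hH : H.Nonempty) {d : V → ℝ}
    (h : ∀ e ∈ H, ∃ g : V × V → ℝ, 0 ≤ g ∧ Function.support g ⊆ H ∧ g e ≠ 0 ∧ netflow g = d) :
    ∃ f : V × V → ℝ, 0 ≤ f ∧ Function.support f = H ∧ netflow f = d := by
  choose! g hg hgH hge hgnet using h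
  have hsum : ∀ e, ∑ e' ∈ H, g e' e ≠ 0 ↔ e ∈ H := by
    intro e
    rw [Ne, Finset.sum_eq_zero_iff_of_nonneg fun e' he' => hg e' he' e]
    push Not
    refine ⟨fun ⟨e', he', hne⟩ => hgH e' he' hne, fun he => ⟨e, he, hge e he⟩⟩
  have hcard : (#H : ℝ) ≠ 0 := by exact_mod_cast hH.card_pos.ne'
  refine ⟨(#H : ℝ)⁻¹ • ∑ e ∈ H, g e, ?_, ?_, ?_⟩
  · exact smul_nonneg (by positivity) (Finset.sum_nonneg fun e he => hg e he)
  · ext e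
    simp [Finset.sum_apply, hcard, hsum]
  · rw [map_smul, map_sum, Finset.sum_congr rfl hgnet, Finset.sum_const,
    ← Nat.cast_smul_eq_nsmul ℝ, smul_smul, inv_mul_cancel₀ hcard, one_smul]

theorem exists_flow_support_eq [LinearOrder V] {H : Finset (V × V)} (hH : H.Nonempty) {s t : V}
    (hin : ∀ v ≠ s, ∃ u, u < v ∧ (u, v) ∈ H) (hout : ∀ v ≠ t, ∃ w, v < w ∧ (v, w) ∈ H) :
    ∃ f : V × V → ℝ, 0 ≤ f ∧ Function.support f = H ∧
      netflow f = Pi.single s 1 - Pi.single t 1 := by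
  refine exists_support_eq_of_forall_mem hH fun e he => ?_
  obtain ⟨g₁, hg₁, hg₁H, hg₁net⟩ :=
    exists_flow_from_of_forall_exists_pred (H := (H : Set (V × V))) wellFounded_lt hin e.1
  obtain ⟨g₂, hg₂, hg₂H, hg₂net⟩ :=
    exists_flow_to_of_forall_exists_succ (H := (H : Set (V × V))) wellFounded_gt hout e.2
  have hδ : (0 : V × V → ℝ) ≤ Pi.single e 1 := Pi.single_nonneg.2 zero_le_one
  refine ⟨g₁ + Pi.single e 1 + g₂, add_nonneg (add_nonneg hg₁ hδ) hg₂, ?_, ?_, ?_⟩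
  · refine (Function.support_add _ _).trans (Set.union_subset ?_ hg₂H)
    refine (Function.support_add _ _).trans (Set.union_subset hg₁H ?_)
    exact Pi.support_single_subset.trans (Set.singleton_subset_iff.2 he)
  · refine ne_of_gt ?_
    simp only [Pi.add_apply, Pi.single_eq_same]
    linarith [show 0 ≤ g₁ e from hg₁ e, show 0 ≤ g₂ e from hg₂ e]
  · rw [map_add, map_add, hg₁net, hg₂net, netflow_single]
    abel

end Flow

theorem isCRYSupport_iff {n : ℕ} (h0 : (0 : Fin (n + 1)) ≠ Fin.last n)
    (H : Finset (Fin (n + 1) × Fin (n + 1))) :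
    IsCRYSupport n H ↔ (∀ e ∈ H, e.1 < e.2) ∧ ∃ f : Fin (n + 1) × Fin (n + 1) → ℝ, 0 ≤ f ∧
      Function.support f = H ∧ netflow f = Pi.single 0 1 - Pi.single (Fin.last n) 1 := by
  have hnet : ∀ v : Fin (n + 1), (if v = 0 then 1 else if v = Fin.last n then -1 else 0 : ℝ) =
      (Pi.single 0 1 - Pi.single (Fin.last n) 1 : Fin (n + 1) → ℝ) v := by
    intro v
    by_cases hv : v = 0
    · simp [hv, h0]
    · by_cases hl : v = Fin.last n
      · rw [if_neg hv, if_pos hl, hl, Pi.sub_apply, Pi.single_eq_of_ne h0.symm,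
          Pi.single_eq_same]
        norm_num
      · simp [hv, hl]
  simp only [IsCRYSupport, Pi.le_def, Pi.zero_apply, Set.ext_iff, Function.mem_support,
    Finset.mem_coe, funext_iff, netflow_apply, hnet]

/-- A subgraph `H` of the complete DAG `K_{n+1}` is a primitive face graph of `CRY_n`
(the support of a flow with netflow `(1, 0, …, 0, -1)` using all vertices) if and only if
every vertex other than the first has at least one incoming edge in `H` and every vertex
other than the last has at least one outgoing edge in `H`. -/
theorem stmt11 (n : ℕ) (hn : 1 ≤ n) (H : Finset (Fin (n + 1) × Fin (n + 1)))
    (hE : ∀ e ∈ H, e.1 < e.2) :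
    (IsCRYSupport n H ∧ ∀ v : Fin (n + 1), ∃ e ∈ H, e.1 = v ∨ e.2 = v) ↔
      ((∀ v : Fin (n + 1), v ≠ 0 → ∃ u, (u, v) ∈ H) ∧
        (∀ v : Fin (n + 1), v ≠ Fin.last n → ∃ w, (v, w) ∈ H)) := by
  have h0 : (0 : Fin (n + 1)) ≠ Fin.last n := by
    rw [ne_comm, Ne, Fin.last_eq_zero_iff]
    omega
  rw [isCRYSupport_iff h0]
  constructor
  · rintro ⟨⟨-, f, hf, hsupp, hnet⟩, hcover⟩
    have hcover' : ∀ v, ∃ e, f e ≠ 0 ∧ (e.1 = v ∨ e.2 = v) := fun v => by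
      simpa [← Function.mem_support, hsupp] using hcover v
    refine ⟨fun v hv => ?_, fun v hv => ?_⟩
    · obtain ⟨u, hu⟩ := exists_inflow_of_netflow_nonpos hf
        (by simp [hnet, Pi.single_eq_of_ne hv, Pi.single_apply, ite_nonneg]) (hcover' v)
      exact ⟨u, by simpa [← Function.mem_support, hsupp] using hu⟩
    · obtain ⟨w, hw⟩ := exists_outflow_of_netflow_nonneg hf
        (by simp [hnet, Pi.single_eq_of_ne hv, Pi.single_apply, ite_nonneg]) (hcover' v)
      exact ⟨w, by simpa [← Function.mem_support, hsupp] using hw⟩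
  · rintro ⟨hin, hout⟩
    obtain ⟨w₀, hw₀⟩ := hout 0 h0
    refine ⟨⟨hE, exists_flow_support_eq ⟨_, hw₀⟩
      (fun v hv => (hin v hv).imp fun u hu => ⟨hE _ hu, hu⟩)
      (fun v hv => (hout v hv).imp fun w hw => ⟨hE _ hw, hw⟩)⟩, fun v => ?_⟩
    by_cases hv : v = Fin.last n
    · obtain ⟨u, hu⟩ := hin v (hv ▸ h0.symm)
      exact ⟨_, hu, Or.inr rfl⟩
    · obtain ⟨w, hw⟩ := hout v hv
      exact ⟨_, hw, Or.inl rfl⟩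
end

section
/- For each k ≥ 0, the number of subgraphs of the complete DAG K_{n+1} that consist of all vertices, have every vertex i ≤ n with out-degree at least 1, have prescribed set S ⊆ {1, ..., n-1} of indices of vertices allowed positive in-degree, and whose total sum of out-degrees is n + k, is the coefficient of x^{n+k} in the product prod_{j=1}^{n} ((x+1)^{seq(S)_j} - 1), where seq(S)_j = 1 + #{s ∈ S : s ≥ n - j} for the appropriate indexing. -/
/-!
Recording a subgraph by the out-neighbourhood of each vertex turns the admissible subgraphs
into tuples `(T_v)_v`, where `T_v` is an arbitrary nonempty subset of the admissible targets of
`v` (vertex `n` has none), and the number of edges is `∑ #T_v`. Hence the edge generating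
function is `∏_v ∑_{∅ ≠ T ⊆ A_v} x^#T = ∏_v ((x + 1)^#A_v - 1)`, and for `v = j - 1` the set
`A_v` consists of the last vertex and the elements of `S` that are at least `j`.
-/

open Polynomial Finset

section Fibers

variable {α β : Type*} [Fintype α] [Fintype β] [DecidableEq α] [DecidableEq β]

def finsetProdEquivPi : Finset (α × β) ≃ (α → Finset β) where
  toFun H a := {b | (a, b) ∈ H}
  invFun f := (univ.sigma f).map (Equiv.sigmaEquivProd α β).toEmbedding
  left_inv H := by ext ⟨a, b⟩; simp
  right_inv f := by funext a; ext b; simp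

@[simp]
theorem mem_finsetProdEquivPi {H : Finset (α × β)} {a : α} {b : β} :
    b ∈ finsetProdEquivPi H a ↔ (a, b) ∈ H := by
  simp [finsetProdEquivPi]

theorem card_eq_sum_card_finsetProdEquivPi (H : Finset (α × β)) :
    #H = ∑ a, #(finsetProdEquivPi H a) := by
  conv_lhs => rw [← finsetProdEquivPi.symm_apply_apply H]
  simp [finsetProdEquivPi, card_sigma]

theorem natCard_finsetProd_fibers_mem_and_card_eq (D : α → Finset (Finset β)) (m : ℕ) :
    Nat.card {H : Finset (α × β) // (∀ a, finsetProdEquivPi H a ∈ D a) ∧ #H = m} =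
      #{p ∈ Fintype.piFinset D | ∑ a, #(p a) = m} := by
  rw [Nat.card_congr (finsetProdEquivPi.subtypeEquiv
      (q := fun p => (∀ a, p a ∈ D a) ∧ ∑ a, #(p a) = m)
      fun H => by rw [card_eq_sum_card_finsetProdEquivPi H]),
    Nat.card_eq_fintype_card, Fintype.card_subtype]
  congr 1
  ext p
  simp [Fintype.mem_piFinset]

end Fibers

theorem coeff_prod_sum_X_pow_card {R ι κ : Type*} [CommSemiring R] [Fintype ι] [DecidableEq ι]
    (D : ι → Finset (Finset κ)) (m : ℕ) :
    (∏ i, ∑ T ∈ D i, (X : R[X]) ^ #T).coeff m = #{p ∈ Fintype.piFinset D | ∑ i, #(p i) = m} := by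
  simp_rw [prod_univ_sum, prod_pow_eq_pow_sum, finsetSum_coeff, coeff_X_pow, sum_boole, eq_comm]

theorem sum_powerset_filter_nonempty_pow_card {R κ : Type*} [CommRing R] (A : Finset κ) (x : R) :
    ∑ T ∈ A.powerset with T.Nonempty, x ^ #T = (x + 1) ^ #A - 1 := by
  have hempty : {T ∈ A.powerset | ¬T.Nonempty} = {∅} := by
    ext T; simp +contextual [not_nonempty_iff_eq_empty]
  rw [eq_sub_iff_add_eq, ← sum_pow_mul_eq_add_pow,
    ← sum_filter_add_sum_filter_not A.powerset (·.Nonempty), hempty]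
  simp

def admissibleTargets (n : ℕ) (S : Finset ℕ) (v : Fin (n + 1)) : Finset (Fin (n + 1)) :=
  {w | v < w ∧ ((w : ℕ) = n ∨ (w : ℕ) ∈ S)}

theorem admissibleTargets_last (n : ℕ) (S : Finset ℕ) : admissibleTargets n S (Fin.last n) = ∅ :=
  filter_false_of_mem fun w _ h => (Fin.le_last w).not_gt h.1

theorem card_admissibleTargets_castSucc {n : ℕ} {S : Finset ℕ} (hS : S ⊆ Icc 1 (n - 1))
    (i : Fin n) : #(admissibleTargets n S i.castSucc) = 1 + #{s ∈ S | (i : ℕ) + 1 ≤ s} := by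
  have hn : n ∉ S := fun h => by have := hS h; simp at this; omega
  have hvals : (admissibleTargets n S i.castSucc).map Fin.valEmbedding =
      insert n {s ∈ S | (i : ℕ) + 1 ≤ s} := by
    ext x
    have hx : x ∈ S → x < n + 1 := fun h => by have := hS h; simp at this; omega
    simp only [admissibleTargets, mem_map, mem_filter, mem_univ, true_and, Fin.valEmbedding_apply,
      mem_insert, Fin.lt_def, Fin.val_castSucc]
    constructor
    · rintro ⟨w, ⟨hw, h | h⟩, rfl⟩
      · exact Or.inl h
      · exact Or.inr ⟨h, hw⟩
    · rintro (rfl | ⟨h, hw⟩)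
      · exact ⟨Fin.last x, ⟨by simp, by simp⟩, rfl⟩
      · exact ⟨⟨x, hx h⟩, ⟨hw, Or.inr h⟩, rfl⟩
  rw [← card_map, hvals, card_insert_of_notMem (by simp [hn]), add_comm]

def outChoices (n : ℕ) (S : Finset ℕ) (v : Fin (n + 1)) : Finset (Finset (Fin (n + 1))) :=
  {T ∈ (admissibleTargets n S v).powerset | (v : ℕ) < n → T.Nonempty}

theorem forall_finsetProdEquivPi_mem_outChoices_iff {n : ℕ} {S : Finset ℕ}
    {H : Finset (Fin (n + 1) × Fin (n + 1))} :
    (∀ v, finsetProdEquivPi H v ∈ outChoices n S v) ↔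
      (∀ e ∈ H, e.1 < e.2) ∧ (∀ v : Fin (n + 1), (v : ℕ) < n → ∃ w, (v, w) ∈ H) ∧
        (∀ e ∈ H, (e.2 : ℕ) = n ∨ (e.2 : ℕ) ∈ S) := by
  simp only [outChoices, mem_filter, mem_powerset, subset_iff, admissibleTargets, mem_univ,
    true_and, mem_finsetProdEquivPi]
  simp only [Finset.Nonempty, mem_finsetProdEquivPi, imp_and, forall_and, Prod.forall]
  exact ⟨fun ⟨⟨hlt, htgt⟩, hout⟩ => ⟨hlt, hout, htgt⟩, fun ⟨hlt, hout, htgt⟩ => ⟨⟨hlt, htgt⟩, hout⟩⟩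

theorem prod_sum_outChoices {n : ℕ} {S : Finset ℕ} (hS : S ⊆ Icc 1 (n - 1)) :
    ∏ v, ∑ T ∈ outChoices n S v, (X : ℤ[X]) ^ #T =
      ∏ j ∈ Icc 1 n, ((X + 1) ^ (1 + #{s ∈ S | j ≤ s}) - 1) := by
  have hlast : ∑ T ∈ outChoices n S (Fin.last n), (X : ℤ[X]) ^ #T = 1 := by
    simp [outChoices, admissibleTargets_last]
  have hcastSucc (i : Fin n) : ∑ T ∈ outChoices n S i.castSucc, (X : ℤ[X]) ^ #T =
      (X + 1) ^ (1 + #{s ∈ S | (i : ℕ) + 1 ≤ s}) - 1 := by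
    simp [outChoices, sum_powerset_filter_nonempty_pow_card, card_admissibleTargets_castSucc hS]
  rw [Fin.prod_univ_castSucc, hlast, mul_one, Fintype.prod_congr _ _ hcastSucc,
    Fin.prod_univ_eq_prod_range (fun i => (X + 1 : ℤ[X]) ^ (1 + #{s ∈ S | i + 1 ≤ s}) - 1),
    range_eq_Ico, prod_Ico_add' (fun j => (X + 1 : ℤ[X]) ^ (1 + #{s ∈ S | j ≤ s}) - 1),
    zero_add, Ico_add_one_right_eq_Icc]

theorem stmt17_general (n k : ℕ) (S : Finset ℕ) (hS : S ⊆ Finset.Icc 1 (n - 1)) :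
    (Nat.card {H : Finset (Fin (n + 1) × Fin (n + 1)) //
        (∀ e ∈ H, e.1 < e.2) ∧
        (∀ v : Fin (n + 1), (v : ℕ) < n → ∃ w, (v, w) ∈ H) ∧
        (∀ e ∈ H, (e.2 : ℕ) = n ∨ (e.2 : ℕ) ∈ S) ∧
        H.card = n + k} : ℤ) =
      (∏ j ∈ Finset.Icc 1 n,
          ((X + 1 : Polynomial ℤ) ^ (1 + (S.filter (fun s => j ≤ s)).card) - 1)).coeff
        (n + k) := by
  rw [← prod_sum_outChoices hS, coeff_prod_sum_X_pow_card,
    ← natCard_finsetProd_fibers_mem_and_card_eq]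
  simp only [forall_finsetProdEquivPi_mem_outChoices_iff, and_assoc]

/-- For `S ⊆ {1, …, n-1}` and `k ≥ 0`, the number of subgraphs `H` of the complete DAG
`K_{n+1}` (edges `i → j` for `i < j`, vertices labelled `1`-based by `Fin (n+1)` with
vertex `v_{i}` having index `i - 1`) such that
* every vertex other than the last has out-degree at least `1`,
* only vertices `v_{i+1}` with `i ∈ S` (and the last vertex) may have positive in-degree,
* the total sum of out-degrees (= number of edges) is `n + k`,
equals the coefficient of `x^{n+k}` in `∏_{j=1}^{n} ((x+1)^{seq(S)_j} - 1)`, where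
`seq(S)_j = 1 + #{s ∈ S : s ≥ j}`. -/
theorem stmt17 (n k : ℕ) (hn : 1 ≤ n) (S : Finset ℕ) (hS : S ⊆ Finset.Icc 1 (n - 1)) :
    (Nat.card {H : Finset (Fin (n + 1) × Fin (n + 1)) //
        (∀ e ∈ H, e.1 < e.2) ∧
        (∀ v : Fin (n + 1), (v : ℕ) < n → ∃ w, (v, w) ∈ H) ∧
        (∀ e ∈ H, (e.2 : ℕ) = n ∨ (e.2 : ℕ) ∈ S) ∧
        H.card = n + k} : ℤ) =
      (∏ j ∈ Finset.Icc 1 n,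
          ((X + 1 : Polynomial ℤ) ^ (1 + (S.filter (fun s => j ≤ s)).card) - 1)).coeff
        (n + k) :=
  stmt17_general n k S hS
end
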